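/- arXiv:2005.11887 — 7 statements merged into one kernel-verified Lean document; each statement's English description precedes it below -/
import Mathlib

section
/- The tensor product over F_p of finitely many fields that are finitely generated extensions of F_p is a reduced ring. -/
/-!
Over a finite field `F` with `q` elements, `x ↦ x ^ q` is an `F`-algebra endomorphism of every
commutative `F`-algebra, and on a tensor product it is the tensor product of the Frobenius maps of
the factors. On a reduced factor Frobenius is injective, and over a field a tensor product of
injective linear maps is injective (each one has a linear left inverse). So Frobenius is injective
on the tensor product, which is therefore reduced: `x ^ q = 0` forces `x = 0`.
-/

open scoped TensorProduct

open Function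

theorem FiniteField.frobeniusAlgHom_injective (F R : Type*) [Field F] [Fintype F] [CommRing R]
    [Algebra F R] [IsReduced R] : Injective (FiniteField.frobeniusAlgHom F R) :=
  (injective_iff_map_eq_zero _).2 fun x hx ↦ IsReduced.eq_zero x ⟨_, hx⟩

namespace PiTensorProduct

variable {ι F : Type*}

theorem map_injective [Field F] {M N : ι → Type*} [∀ i, AddCommGroup (M i)]
    [∀ i, Module F (M i)] [∀ i, AddCommGroup (N i)] [∀ i, Module F (N i)]
    (f : ∀ i, M i →ₗ[F] N i) (hf : ∀ i, Injective (f i)) : Injective (map f) := by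
  choose g hg using fun i ↦ (f i).exists_leftInverse_of_injective (LinearMap.ker_eq_bot.2 (hf i))
  have hleft : map g ∘ₗ map f = LinearMap.id := by
    rw [← map_comp, funext hg, map_id]
  exact LeftInverse.injective (g := map g) (LinearMap.congr_fun hleft)

variable [Field F] [Fintype F] {A : ι → Type*} [∀ i, CommRing (A i)] [∀ i, Algebra F (A i)]

theorem map_frobeniusAlgHom :
    map (fun i ↦ (FiniteField.frobeniusAlgHom F (A i)).toLinearMap) =
      (FiniteField.frobeniusAlgHom F (⨂[F] i, A i)).toLinearMap := by
  ext x
  simp only [LinearMap.compMultilinearMap_apply, map_tprod, AlgHom.toLinearMap_apply,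
    FiniteField.frobeniusAlgHom_apply]
  exact map_pow (tprodMonoidHom F) x _

instance isReduced_of_finiteField [∀ i, IsReduced (A i)] : IsReduced (⨂[F] i, A i) := by
  have hfrob : Injective (FiniteField.frobeniusAlgHom F (⨂[F] i, A i)) := by
    rw [← AlgHom.coe_toLinearMap, ← map_frobeniusAlgHom]
    exact map_injective _ fun i ↦ FiniteField.frobeniusAlgHom_injective F (A i)
  refine (isReduced_iff_pow_one_lt _ (Fintype.one_lt_card (α := F))).2 fun x hx ↦ hfrob ?_
  rwa [map_zero]

end PiTensorProduct

theorem tensor_product_of_fg_field_extensions_isReduced_general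
    (p : ℕ) [Fact p.Prime] (n : ℕ) (K : Fin n → Type*) [∀ i, Field (K i)]
    [∀ i, Algebra (ZMod p) (K i)] :
    IsReduced (PiTensorProduct (ZMod p) K) :=
  PiTensorProduct.isReduced_of_finiteField

/-- The tensor product over `𝔽_p` of finitely many fields, each of which is a finitely
generated field extension of `𝔽_p`, is a reduced ring. -/
theorem tensor_product_of_fg_field_extensions_isReduced
    (p : ℕ) [Fact p.Prime] (n : ℕ) (K : Fin n → Type*) [∀ i, Field (K i)]
    [∀ i, Algebra (ZMod p) (K i)]
    (hfg : ∀ i, ∃ s : Finset (K i),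
      IntermediateField.adjoin (ZMod p) (s : Set (K i)) = ⊤) :
    IsReduced (PiTensorProduct (ZMod p) K) :=
  tensor_product_of_fg_field_extensions_isReduced_general p n K
end

section
/- Let k and k' be fields containing F_p, with φ: k ⊗_{F_p} k' → k ⊗_{F_p} k' the map x ⊗ y ↦ x^p ⊗ y (Frobenius on the first factor, identity on the second). Then φ is injective. -/
open scoped TensorProduct

/-- The Frobenius `x ↦ x ^ p` as a `ZMod p`-algebra homomorphism. -/
noncomputable def frobAlgHom (p : ℕ) [Fact p.Prime] (k : Type*) [CommRing k]
    [Algebra (ZMod p) k] [CharP k p] : k →ₐ[ZMod p] k :=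
  AlgHom.mk' (frobenius k p) (fun c x => by
    simp only [Algebra.smul_def, map_mul]
    congr 1
    rw [frobenius_def, ← map_pow, ZMod.pow_card])

theorem Algebra.TensorProduct.map_id_injective_of_flat {R A A' B : Type*} [CommRing R]
    [Ring A] [Ring A'] [Ring B] [Algebra R A] [Algebra R A'] [Algebra R B] [Module.Flat R B]
    {f : A →ₐ[R] A'} (hf : Function.Injective f) :
    Function.Injective (Algebra.TensorProduct.map f (AlgHom.id R B)) :=
  -- the underlying linear map of `map f id` is definitionally `f.toLinearMap.rTensor B`
  Module.Flat.rTensor_preserves_injective_linearMap f.toLinearMap hf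

theorem partialFrobenius_injective_general (p : ℕ) [Fact p.Prime] (k k' : Type*)
    [Field k] [Field k'] [Algebra (ZMod p) k] [Algebra (ZMod p) k']
    [CharP k p] :
    Function.Injective
      (Algebra.TensorProduct.map (frobAlgHom p k) (AlgHom.id (ZMod p) k')) :=
  Algebra.TensorProduct.map_id_injective_of_flat (frobenius_inj k p)

/-- The partial Frobenius `x ⊗ y ↦ x ^ p ⊗ y` on `k ⊗[𝔽_p] k'` is injective. -/
theorem partialFrobenius_injective (p : ℕ) [Fact p.Prime] (k k' : Type*)
    [Field k] [Field k'] [Algebra (ZMod p) k] [Algebra (ZMod p) k']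
    [CharP k p] [CharP k' p] :
    Function.Injective
      (Algebra.TensorProduct.map (frobAlgHom p k) (AlgHom.id (ZMod p) k')) :=
  partialFrobenius_injective_general p k k'
end

section
/- The map x ⊗ y ↦ x ⊗ y^p (identity on the first factor, Frobenius on the second) acts transitively on the set of primitive idempotents of F_{p^n} ⊗_{F_p} F_{p^m}. -/
open scoped TensorProduct

/-- A primitive idempotent of a commutative ring: a nonzero idempotent `e` such that
for every idempotent `f`, `e * f` is either `e` or `0`. -/
def IsPrimitiveIdempotent {R : Type*} [CommRing R] (e : R) : Prop :=
  IsIdempotentElem e ∧ e ≠ 0 ∧ ∀ f : R, IsIdempotentElem f → (e * f = e ∨ e * f = 0)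

open Polynomial in
lemma frob_fixed_mem (p : ℕ) [Fact p.Prime] (L : Type*) [Field L] [Algebra (ZMod p) L] [DecidableEq L]
    (x : L) (hx : x ^ p = x) : x ∈ Set.range (algebraMap (ZMod p) L) := by
  have hp1 : 1 < p := (Fact.out : p.Prime).one_lt
  have hq0 : (X ^ p - X : L[X]) ≠ 0 := FiniteField.X_pow_card_sub_X_ne_zero L hp1
  set T : Finset L := (X ^ p - X : L[X]).roots.toFinset with hT
  set I : Finset L := Finset.univ.image (algebraMap (ZMod p) L) with hI
  have hIT : I ⊆ T := by
    intro y hy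
    simp only [hI, Finset.mem_image] at hy
    obtain ⟨c, -, rfl⟩ := hy
    simp only [hT, Multiset.mem_toFinset, mem_roots hq0, IsRoot.def, eval_sub, eval_pow, eval_X]
    rw [← map_pow, ZMod.pow_card, sub_self]
  have hinj : Function.Injective (algebraMap (ZMod p) L) := (algebraMap (ZMod p) L).injective
  have hIcard : I.card = p := by
    rw [hI, Finset.card_image_of_injective _ hinj, Finset.card_univ, ZMod.card]
  have hTcard : T.card ≤ p := by
    calc T.card ≤ Multiset.card (X ^ p - X : L[X]).roots := Multiset.toFinset_card_le _
    _ ≤ (X ^ p - X : L[X]).natDegree := card_roots' _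
    _ = p := FiniteField.X_pow_card_sub_X_natDegree_eq L hp1
  have hEq : I = T := Finset.eq_of_subset_of_card_le hIT (by omega)
  have hxT : x ∈ T := by
    simp only [hT, Multiset.mem_toFinset, mem_roots hq0, IsRoot.def, eval_sub, eval_pow, eval_X,
      hx, sub_self]
  rw [← hEq] at hxT
  simp only [hI, Finset.mem_image] at hxT
  obtain ⟨c, -, rfl⟩ := hxT
  exact ⟨c, rfl⟩

lemma ker_frobSub (p : ℕ) [Fact p.Prime] (L : Type*) [Field L] [Algebra (ZMod p) L] [CharP L p] :
    LinearMap.ker ((frobAlgHom p L).toLinearMap - LinearMap.id) =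
      LinearMap.range (Algebra.linearMap (ZMod p) L) := by
  classical
  ext x
  have hfrob : (frobAlgHom p L) x = x ^ p := rfl
  simp only [LinearMap.mem_ker, LinearMap.sub_apply, AlgHom.toLinearMap_apply, LinearMap.id_apply,
    hfrob, sub_eq_zero, LinearMap.mem_range, Algebra.linearMap_apply]
  constructor
  · intro h
    obtain ⟨c, hc⟩ := frob_fixed_mem p L x h
    exact ⟨c, hc⟩
  · rintro ⟨c, rfl⟩
    rw [← map_pow, ZMod.pow_card]


lemma fixed_submodule (p : ℕ) [Fact p.Prime] (n m : ℕ) (hn : 0 < n) (hm : 0 < m) :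
    LinearMap.ker (LinearMap.lTensor (GaloisField p n)
        ((frobAlgHom p (GaloisField p m)).toLinearMap - LinearMap.id)) =
      LinearMap.range (Algebra.TensorProduct.includeLeft (R := ZMod p) (S := ZMod p)
        (A := GaloisField p n) (B := GaloisField p m)).toLinearMap := by
  set R := ZMod p
  set K := GaloisField p n
  set L := GaloisField p m
  set f : L →ₗ[R] L := (frobAlgHom p L).toLinearMap - LinearMap.id with hf
  -- includeLeft as a composition
  have hcomp : (Algebra.TensorProduct.includeLeft (R := R) (S := R) (A := K)
      (B := L)).toLinearMap =
      (LinearMap.lTensor K (Algebra.linearMap R L)) ∘ₗ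
        (TensorProduct.rid R K).symm.toLinearMap := by
    ext a
    simp [TensorProduct.rid_symm_apply]
  have hinj2 : Function.Injective (LinearMap.lTensor K (Algebra.linearMap R L)) :=
    Module.Flat.lTensor_preserves_injective_linearMap _ (algebraMap R L).injective
  have hinjIL : Function.Injective (Algebra.TensorProduct.includeLeft (R := R) (S := R)
      (A := K) (B := L)).toLinearMap := by
    rw [hcomp]; exact hinj2.comp (TensorProduct.rid R K).symm.injective
  -- finrank of range includeLeft
  have hrank1 : Module.finrank R (LinearMap.range (Algebra.TensorProduct.includeLeft (R := R)
      (S := R) (A := K) (B := L)).toLinearMap) = n := by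
    rw [LinearMap.finrank_range_of_inj hinjIL, GaloisField.finrank p hn.ne']
  -- finrank of kernel
  have hexact : Function.Exact (LinearMap.lTensor K (LinearMap.ker f).subtype)
      (LinearMap.lTensor K f) :=
    Module.Flat.lTensor_exact K (LinearMap.exact_subtype_ker_map f)
  have hker : LinearMap.ker (LinearMap.lTensor K f) =
      LinearMap.range (LinearMap.lTensor K (LinearMap.ker f).subtype) :=
    (LinearMap.exact_iff.mp hexact)
  have hinjsub : Function.Injective (LinearMap.lTensor K (LinearMap.ker f).subtype) :=
    Module.Flat.lTensor_preserves_injective_linearMap _ (Submodule.injective_subtype _)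
  have hkerf : Module.finrank R (LinearMap.ker f) = 1 := by
    rw [hf, ker_frobSub p L]
    rw [LinearMap.finrank_range_of_inj (by exact (algebraMap R L).injective)]
    exact Module.finrank_self R
  have hrank2 : Module.finrank R (LinearMap.ker (LinearMap.lTensor K f)) = n := by
    rw [hker, LinearMap.finrank_range_of_inj hinjsub, Module.finrank_tensorProduct,
      GaloisField.finrank p hn.ne', hkerf, mul_one]
  -- inclusion
  have hle : LinearMap.range (Algebra.TensorProduct.includeLeft (R := R) (S := R)
      (A := K) (B := L)).toLinearMap ≤ LinearMap.ker (LinearMap.lTensor K f) := by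
    rintro x ⟨a, rfl⟩
    simp only [LinearMap.mem_ker, AlgHom.toLinearMap_apply, Algebra.TensorProduct.includeLeft_apply,
      LinearMap.lTensor_tmul, hf, LinearMap.sub_apply, AlgHom.toLinearMap_apply,
      LinearMap.id_apply]
    have : (frobAlgHom p L) 1 = 1 := map_one _
    rw [this, sub_self, TensorProduct.tmul_zero]
  exact (Submodule.eq_of_le_of_finrank_le hle (by rw [hrank1, hrank2])).symm

lemma includeLeft_injective' (p : ℕ) [Fact p.Prime] (n m : ℕ) :
    Function.Injective fun a : GaloisField p n =>
      (a ⊗ₜ[ZMod p] (1 : GaloisField p m) : GaloisField p n ⊗[ZMod p] GaloisField p m) := by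
  have hcomp : (fun a : GaloisField p n =>
      (a ⊗ₜ[ZMod p] (1 : GaloisField p m) : GaloisField p n ⊗[ZMod p] GaloisField p m)) =
      (LinearMap.lTensor (GaloisField p n) (Algebra.linearMap (ZMod p) (GaloisField p m))) ∘
        (TensorProduct.rid (ZMod p) (GaloisField p n)).symm := by
    funext a
    simp [TensorProduct.rid_symm_apply]
  rw [hcomp]
  exact (Module.Flat.lTensor_preserves_injective_linearMap _
    (algebraMap (ZMod p) (GaloisField p m)).injective).comp
    (TensorProduct.rid (ZMod p) (GaloisField p n)).symm.injective


/-- The partial Frobenius `x ⊗ y ↦ x ⊗ y ^ p` acts transitively on the set of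
primitive idempotents of `𝔽_{p^n} ⊗[𝔽_p] 𝔽_{p^m}`. -/
theorem partialFrobenius_transitive_on_primitive_idempotents
    (p : ℕ) [Fact p.Prime] (n m : ℕ) (hn : 0 < n) (hm : 0 < m)
    (φ : GaloisField p n ⊗[ZMod p] GaloisField p m →ₐ[ZMod p]
      GaloisField p n ⊗[ZMod p] GaloisField p m)
    (hφ : φ = Algebra.TensorProduct.map (AlgHom.id (ZMod p) (GaloisField p n))
      (frobAlgHom p (GaloisField p m)))
    (e e' : GaloisField p n ⊗[ZMod p] GaloisField p m)
    (he : IsPrimitiveIdempotent e) (he' : IsPrimitiveIdempotent e') :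
    ∃ k : ℕ, (⇑φ)^[k] e = e' := by
  classical
  have hm1 : m - 1 + 1 = m := Nat.succ_pred_eq_of_pos hm
  have hsucc' : ∀ (k : ℕ) (x : GaloisField p n ⊗[ZMod p] GaloisField p m),
      (⇑φ)^[k + 1] x = φ ((⇑φ)^[k] x) := fun k x => Function.iterate_succ_apply' _ k x
  -- φ on pure tensors
  have hφt : ∀ (a : GaloisField p n) (b : GaloisField p m), φ (a ⊗ₜ b) = a ⊗ₜ (b ^ p) := by
    intro a b
    rw [hφ]
    rfl
  -- iterates on pure tensors
  have hiter : ∀ (k : ℕ) (a : GaloisField p n) (b : GaloisField p m),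
      (⇑φ)^[k] (a ⊗ₜ b) = a ⊗ₜ (b ^ p ^ k) := by
    intro k
    induction k with
    | zero => intro a b; simp
    | succ k ih =>
      intro a b
      rw [hsucc', ih, hφt, ← pow_mul, pow_succ]
  -- φ^[m] = id
  have hLcard : ∀ b : GaloisField p m, b ^ p ^ m = b := by
    intro b
    have h1 : Nat.card (GaloisField p m) = p ^ m := GaloisField.card p m hm.ne'
    have hF : Fintype (GaloisField p m) := Fintype.ofFinite _
    have h2 : Fintype.card (GaloisField p m) = p ^ m := by rw [← Nat.card_eq_fintype_card, h1]
    rw [← h2]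
    exact FiniteField.pow_card b
  have hadd : ∀ (k : ℕ) (u v : GaloisField p n ⊗[ZMod p] GaloisField p m),
      (⇑φ)^[k] (u + v) = (⇑φ)^[k] u + (⇑φ)^[k] v := by
    intro k
    induction k with
    | zero => intro u v; simp
    | succ k ih => intro u v; rw [hsucc', hsucc', hsucc', ih, map_add]
  have hid : ∀ x : GaloisField p n ⊗[ZMod p] GaloisField p m, (⇑φ)^[m] x = x := by
    intro x
    refine TensorProduct.induction_on x ?_ ?_ ?_
    · exact Function.iterate_fixed (map_zero φ) m
    · intro a b; rw [hiter, hLcard]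
    · intro u v hu hv; rw [hadd, hu, hv]
  -- φ bijective
  have hbij : Function.Bijective ⇑φ := by
    refine Function.bijective_iff_has_inverse.mpr ⟨(⇑φ)^[m - 1], fun x => ?_, fun x => ?_⟩
    · have h1 : (⇑φ)^[m - 1] (φ x) = (⇑φ)^[m - 1 + 1] x := (Function.iterate_succ_apply _ _ _).symm
      rw [h1, hm1, hid]
    · have h1 : φ ((⇑φ)^[m - 1] x) = (⇑φ)^[m - 1 + 1] x := (hsucc' _ _).symm
      rw [h1, hm1, hid]
  -- φ preserves primitivity
  have hprim : ∀ x, IsPrimitiveIdempotent x → IsPrimitiveIdempotent (φ x) := by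
    rintro x ⟨hxi, hx0, hxp⟩
    refine ⟨by rw [IsIdempotentElem, ← map_mul, hxi],
      fun h => hx0 (hbij.1 (by rw [h, map_zero])), ?_⟩
    intro f hf
    obtain ⟨g, rfl⟩ := hbij.2 f
    have hg : IsIdempotentElem g := hbij.1 (show φ (g * g) = φ g by rw [map_mul]; exact hf)
    rcases hxp g hg with h | h
    · left; rw [← map_mul, h]
    · right; rw [← map_mul, h, map_zero]
  have hprimk : ∀ k : ℕ, IsPrimitiveIdempotent ((⇑φ)^[k] e) := by
    intro k
    induction k with
    | zero => exact he
    | succ k ih => rw [hsucc']; exact hprim _ ih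
  -- orthogonality of distinct primitive idempotents
  have horth : ∀ x y : GaloisField p n ⊗[ZMod p] GaloisField p m,
      IsPrimitiveIdempotent x → IsPrimitiveIdempotent y → x ≠ y → x * y = 0 := by
    rintro x y ⟨hxi, hx0, hxp⟩ ⟨hyi, hy0, hyp⟩ hne
    rcases hxp y hyi with h1 | h1
    · rcases hyp x hxi with h2 | h2
      · exact absurd (by rw [← h1, mul_comm, h2]) hne
      · rw [mul_comm]; exact h2
    · exact h1
  -- the orbit sum
  set S : Finset (GaloisField p n ⊗[ZMod p] GaloisField p m) :=
    Finset.image (fun k => (⇑φ)^[k] e) (Finset.range m) with hS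
  have hmemS : e ∈ S := Finset.mem_image.mpr ⟨0, Finset.mem_range.mpr hm, rfl⟩
  have hSprim : ∀ x ∈ S, IsPrimitiveIdempotent x := by
    intro x hx
    obtain ⟨k, -, rfl⟩ := Finset.mem_image.mp hx
    exact hprimk k
  set s : GaloisField p n ⊗[ZMod p] GaloisField p m := ∑ x ∈ S, x with hs
  -- S is stable under φ
  have hSmap : S.image ⇑φ = S := by
    ext x
    simp only [hS, Finset.image_image, Finset.mem_image, Finset.mem_range, Function.comp]
    constructor
    · rintro ⟨k, hk, rfl⟩
      rcases eq_or_lt_of_le (Nat.succ_le_of_lt hk) with h | h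
      · refine ⟨0, hm, ?_⟩
        have h' : k + 1 = m := h
        rw [Function.iterate_zero_apply, ← hsucc', h', hid]
      · exact ⟨k + 1, h, hsucc' k e⟩
    · rintro ⟨k, hk, rfl⟩
      cases k with
      | zero =>
        refine ⟨m - 1, Nat.sub_lt hm one_pos, ?_⟩
        rw [← hsucc', hm1, hid, Function.iterate_zero_apply]
      | succ k =>
        exact ⟨k, lt_trans (Nat.lt_succ_self k) hk, (hsucc' k e).symm⟩
  have hφs : φ s = s := by
    have himg := Finset.sum_image (f := fun x => x) (g := ⇑φ) (s := S)
      (fun x _ y _ h => hbij.1 h)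
    rw [hs, map_sum]
    calc ∑ x ∈ S, φ x = ∑ x ∈ S.image ⇑φ, x := himg.symm
    _ = ∑ x ∈ S, x := by rw [hSmap]
  -- s is idempotent
  have hss : s * s = s := by
    rw [hs, Finset.sum_mul_sum]
    refine Finset.sum_congr rfl ?_
    intro x hx
    rw [Finset.sum_eq_single_of_mem x hx
      (fun y hy hne => horth x y (hSprim x hx) (hSprim y hy) (Ne.symm hne))]
    exact (hSprim x hx).1
  -- s ≠ 0
  have hse : s * e = e := by
    rw [hs, Finset.sum_mul, Finset.sum_eq_single_of_mem e hmemS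
      (fun y hy hne => by rw [mul_comm]; exact horth e y he (hSprim y hy) (Ne.symm hne))]
    exact he.1
  have hs0 : s ≠ 0 := fun h => he.2.1 (by rw [← hse, h, zero_mul])
  -- s is fixed, so s ∈ range includeLeft, so s = 0 or 1; hence s = 1
  have hs1 : s = 1 := by
    have hφlin : φ.toLinearMap = LinearMap.lTensor (GaloisField p n)
        (frobAlgHom p (GaloisField p m)).toLinearMap := by
      apply TensorProduct.ext'
      intro a b
      simp only [AlgHom.toLinearMap_apply, LinearMap.lTensor_tmul, hφt]
      rfl
    have hkermem : s ∈ LinearMap.ker (LinearMap.lTensor (GaloisField p n)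
        ((frobAlgHom p (GaloisField p m)).toLinearMap - LinearMap.id)) := by
      rw [LinearMap.lTensor_sub, LinearMap.lTensor_id, LinearMap.mem_ker, LinearMap.sub_apply,
        LinearMap.id_apply, ← hφlin, AlgHom.toLinearMap_apply, hφs, sub_self]
    rw [fixed_submodule p n m hn hm] at hkermem
    obtain ⟨a, ha⟩ := hkermem
    have ha' : s = a ⊗ₜ 1 := ha.symm
    have haidem : a * a = a := by
      refine includeLeft_injective' p n m ?_
      show ((a * a) ⊗ₜ (1 : GaloisField p m) :
        GaloisField p n ⊗[ZMod p] GaloisField p m) = a ⊗ₜ 1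
      rw [show ((a * a) ⊗ₜ (1 : GaloisField p m) :
          GaloisField p n ⊗[ZMod p] GaloisField p m) = (a ⊗ₜ 1) * (a ⊗ₜ 1) by
        rw [Algebra.TensorProduct.tmul_mul_tmul, one_mul], ← ha', hss, ha']
    rcases IsIdempotentElem.iff_eq_zero_or_one.mp haidem with h | h
    · exact absurd (by rw [ha', h, TensorProduct.zero_tmul]) hs0
    · rw [ha', h, Algebra.TensorProduct.one_def]
  -- conclude
  have he's : e' * s = e' := by rw [hs1, mul_one]
  have hex : ∃ x ∈ S, e' * x ≠ 0 := by
    by_contra h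
    push_neg at h
    apply he'.2.1
    rw [← he's, hs, Finset.mul_sum]
    exact Finset.sum_eq_zero h
  obtain ⟨x, hxS, hxne⟩ := hex
  have h1 : e' * x = e' := (he'.2.2 x (hSprim x hxS).1).resolve_right hxne
  have h2 : x * e' = x := ((hSprim x hxS).2.2 e' he'.1).resolve_right
    (by rw [mul_comm]; exact hxne)
  obtain ⟨k, -, rfl⟩ := Finset.mem_image.mp hxS
  exact ⟨k, by rw [← h2, mul_comm, h1]⟩
end

section
/- Let R be a reduced commutative ring of characteristic p and A = R⟦X⟧[X^{-1}]. If u ∈ A satisfies u^p = u, then u lies in the subring R (constant Laurent series) and satisfies u^p = u in R. -/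
/-!
Over a reduced ring the leading coefficient of `x ^ n` is the `n`-th power of that of `x`, which
is nonzero, so `ord (x ^ n) = n • ord x`. Hence a Hahn series with `x ^ p = x` has order `0`,
i.e. its leading coefficient is its constant coefficient `u₀`. Since Frobenius is additive in
characteristic `p`, `u - C u₀` is again Frobenius-fixed; its constant coefficient vanishes, so it
has leading coefficient `0` and is `0`.
-/

namespace HahnSeries

theorem leadingCoeff_pow_ne_zero_of_isReduced {Γ R : Type*} [PartialOrder Γ] [MonoidWithZero R]
    [IsReduced R] {x : HahnSeries Γ R} (hx : x ≠ 0) (n : ℕ) : x.leadingCoeff ^ n ≠ 0 :=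
  fun h ↦ hx (leadingCoeff_eq_zero.mp (IsNilpotent.eq_zero ⟨n, h⟩))

variable {Γ R : Type*} [AddCommMonoid Γ] [LinearOrder Γ] [IsOrderedCancelAddMonoid Γ]
  [Semiring R] [IsReduced R]

theorem leadingCoeff_pow_of_isReduced (x : HahnSeries Γ R) (n : ℕ) :
    (x ^ n).leadingCoeff = x.leadingCoeff ^ n := by
  induction n with
  | zero => rw [pow_zero, pow_zero, leadingCoeff_one]
  | succ n ih =>
    by_cases hx : x = 0
    · simp [hx]
    have hne : (x ^ n).leadingCoeff * x.leadingCoeff ≠ 0 := by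
      rw [ih, ← pow_succ]
      exact leadingCoeff_pow_ne_zero_of_isReduced hx _
    rw [pow_succ, leadingCoeff_mul_of_ne_zero hne, ih, pow_succ]

theorem order_pow_of_isReduced (x : HahnSeries Γ R) (n : ℕ) :
    (x ^ n).order = n • x.order := by
  induction n with
  | zero => simp
  | succ n ih =>
    by_cases hx : x = 0
    · simp [hx]
    have hne : (x ^ n).leadingCoeff * x.leadingCoeff ≠ 0 := by
      rw [leadingCoeff_pow_of_isReduced, ← pow_succ]
      exact leadingCoeff_pow_ne_zero_of_isReduced hx _
    rw [pow_succ, order_mul_of_ne_zero hne, ih, succ_nsmul]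

variable [IsAddTorsionFree Γ]

theorem order_eq_zero_of_pow_eq_self {x : HahnSeries Γ R} {n : ℕ} (hn : 2 ≤ n)
    (h : x ^ n = x) : x.order = 0 := by
  have : (n - 1) • x.order + x.order = 0 + x.order := by
    rw [← succ_nsmul, Nat.sub_add_cancel (by omega), ← order_pow_of_isReduced, h, zero_add]
  exact (nsmul_eq_zero_iff_right (by omega)).mp (add_right_cancel this)

theorem leadingCoeff_eq_coeff_zero_of_pow_eq_self {x : HahnSeries Γ R} {n : ℕ} (hn : 2 ≤ n)
    (h : x ^ n = x) : x.leadingCoeff = x.coeff 0 := by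
  rw [leadingCoeff_eq, order_eq_zero_of_pow_eq_self hn h]

end HahnSeries

open HahnSeries in
/-- Over a reduced commutative ring `R` of characteristic `p`, a Laurent series `u`
with `u ^ p = u` is a constant, i.e. lies in the image of `R`, and the constant
satisfies `c ^ p = c`. -/
theorem laurentSeries_frobenius_fixed_is_constant (p : ℕ) [Fact p.Prime]
    (R : Type*) [CommRing R] [IsReduced R] [CharP R p]
    (u : LaurentSeries R) (h : u ^ p = u) :
    ∃ c : R, c ^ p = c ∧ u = HahnSeries.C c := by
  have hp : 2 ≤ p := (Fact.out : p.Prime).two_le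
  have : CharP (LaurentSeries R) p := charP_of_injective_ringHom C_injective p
  have hc : u.coeff 0 ^ p = u.coeff 0 := by
    rw [← leadingCoeff_eq_coeff_zero_of_pow_eq_self hp h, ← leadingCoeff_pow_of_isReduced, h]
  refine ⟨u.coeff 0, hc, ?_⟩
  have hv : (u - C (u.coeff 0)) ^ p = u - C (u.coeff 0) := by
    rw [sub_pow_char, h, ← map_pow, hc]
  have hv0 : (u - C (u.coeff 0)).leadingCoeff = 0 := by
    rw [leadingCoeff_eq_coeff_zero_of_pow_eq_self hp hv]
    simp
  exact sub_eq_zero.mp (leadingCoeff_eq_zero.mp hv0)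
end

section
/- Let D be a module over a complete Tate ring E with ring of definition E⁺ and pseudo-uniformizer t, equipped with a map φ_s: D → D satisfying φ_s(t^k m) = t^{pk} φ_s(m) in an appropriate semilinear sense, such that φ_s(M) ⊆ t^{-r} M for a finitely generated E⁺-submodule M with M[t^{-1}] = D. Then for every integer k ≥ (r+1)/(p−1), φ_s(t^k M) ⊆ t^{k+1} M; consequently D^{++} := {x ∈ D : φ_s^n(x) → 0 t-adically} satisfies D^{++}[t^{-1}] = D. -/
/-- Let `A = E⁺` be a Noetherian commutative ring with an element `t` and a ring
endomorphism `σ` with `σ t = t ^ p` (`p ≥ 2`). Let `D` be an `A`-module on which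
`t` acts bijectively (so `D` is a module over `E = E⁺[t⁻¹]`), `M ⊆ D` a finitely
generated submodule with `M[1/t] = D`, and `φₛ : D → D` a `σ`-semilinear additive
map with `φₛ(M) ⊆ t^{-r} M`. Then for every `k` with `r + 1 ≤ (p-1)·k` we have
`φₛ(t^k M) ⊆ t^{k+1} M`; consequently, `D^{++}`, the set of `x` with
`φₛ^n(x) → 0` in the `t`-adic topology (given by the submodules `t^j M`),
satisfies `D^{++}[1/t] = D`. -/
theorem etale_plusplus_generates (A : Type*) [CommRing A] [IsNoetherianRing A]
    (t : A) (p r : ℕ) (hp : 2 ≤ p) (σ : A →+* A) (hσt : σ t = t ^ p)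
    (D : Type*) [AddCommGroup D] [Module A D]
    (htinv : Function.Bijective (fun d : D => t • d))
    (M : Submodule A D) (hMfg : M.FG)
    (hMgen : ∀ d : D, ∃ n : ℕ, t ^ n • d ∈ M)
    (φs : D →+ D) (hsem : ∀ (c : A) (m : D), φs (c • m) = σ c • φs m)
    (hr : ∀ m ∈ M, t ^ r • φs m ∈ M) :
    (∀ k : ℕ, r + 1 ≤ (p - 1) * k → ∀ m ∈ M, ∃ m' ∈ M,
        φs (t ^ k • m) = t ^ (k + 1) • m') ∧
      ∀ d : D, ∃ k : ℕ, t ^ k • d ∈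
        {x : D | ∀ j : ℕ, ∃ N : ℕ, ∀ n ≥ N, ∃ m ∈ M, (⇑φs)^[n] x = t ^ j • m} := by
  have key : ∀ a : ℕ, r + 1 ≤ (p - 1) * a → ∀ m ∈ M, ∃ m' ∈ M,
      φs (t ^ a • m) = t ^ (a + 1) • m' := by
    intro a ha m hm
    have hmul : (p - 1) * a + a = p * a := by
      have h1 : p - 1 + 1 = p := Nat.sub_add_cancel (by omega)
      calc (p - 1) * a + a = ((p - 1) + 1) * a := by ring
        _ = p * a := by rw [h1]
    have hpa : a + 1 + r ≤ p * a := by omega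
    refine ⟨t ^ (p * a - (a + 1 + r)) • (t ^ r • φs m),
      Submodule.smul_mem _ _ (hr m hm), ?_⟩
    rw [hsem, map_pow, hσt, ← pow_mul, smul_smul, smul_smul,
      ← pow_add, ← pow_add]
    congr 2
    omega
  refine ⟨key, ?_⟩
  have iter : ∀ (n a : ℕ) (m : D), r + 1 ≤ (p - 1) * a → m ∈ M →
      ∃ m' ∈ M, (⇑φs)^[n] (t ^ a • m) = t ^ (a + n) • m' := by
    intro n
    induction n with
    | zero => intro a m ha hm; exact ⟨m, hm, by simp⟩
    | succ n ih =>
      intro a m ha hm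
      obtain ⟨m1, hm1, heq⟩ := key a ha m hm
      obtain ⟨m', hm', heq'⟩ := ih (a + 1) m1
        (le_trans ha (Nat.mul_le_mul_left _ (by omega))) hm1
      refine ⟨m', hm', ?_⟩
      rw [Function.iterate_succ_apply, heq, heq',
        show a + (n + 1) = a + 1 + n from by omega]
  intro d
  obtain ⟨n₀, hn₀⟩ := hMgen d
  refine ⟨n₀ + (r + 1), ?_⟩
  intro j
  refine ⟨j, fun n hn => ?_⟩
  have ha : r + 1 ≤ (p - 1) * (r + 1) :=
    Nat.le_mul_of_pos_left _ (by omega)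
  obtain ⟨m', hm', heq⟩ := iter n (r + 1) (t ^ n₀ • d) ha hn₀
  refine ⟨t ^ (r + 1 + n - j) • m', Submodule.smul_mem _ _ hm', ?_⟩
  have hx : t ^ (n₀ + (r + 1)) • d = t ^ (r + 1) • (t ^ n₀ • d) := by
    rw [smul_smul, ← pow_add, Nat.add_comm]
  rw [hx, heq, smul_smul, ← pow_add]
  congr 2
  omega
end

section
/- Let A and B be k-vector spaces with semilinear actions of a group G over a field k, where B has trivial G-action. Then (A ⊗_k B)^G ≅ A^G ⊗_k B. -/
/-!
Choose a basis `(bᵢ)` of `B`, so that every `x : A ⊗ B` is uniquely `∑ᵢ xᵢ ⊗ bᵢ`. As `G` acts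
only on the left factor, `g • x = ∑ᵢ (g • xᵢ) ⊗ bᵢ`, hence `x` is invariant iff every coordinate
`xᵢ` is, i.e. iff `x` lies in the image of `A^G ⊗ B`. That image is a copy of `A^G ⊗ B` because
`B` is flat.
-/

open TensorProduct

namespace TensorProduct

variable {R M M' N κ : Type*} [CommSemiring R] [AddCommMonoid M] [Module R M] [AddCommMonoid M']
  [Module R M'] [AddCommMonoid N] [Module R N] [DecidableEq κ] (𝒞 : Module.Basis κ R N)

theorem equivFinsuppOfBasisRight_rTensor (f : M →ₗ[R] M') (x : M ⊗[R] N) :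
    equivFinsuppOfBasisRight 𝒞 (f.rTensor N x) =
      Finsupp.mapRange.linearMap f (equivFinsuppOfBasisRight 𝒞 x) := by
  induction x using TensorProduct.induction_on with
  | zero => simp
  | tmul m n => ext i; simp
  | add x y hx hy => simp only [map_add, hx, hy]

theorem mem_range_rTensor_iff (f : M →ₗ[R] M') (x : M' ⊗[R] N) :
    x ∈ LinearMap.range (f.rTensor N) ↔
      ∀ i, equivFinsuppOfBasisRight 𝒞 x i ∈ LinearMap.range f := by
  constructor
  · rintro ⟨y, rfl⟩ i
    rw [equivFinsuppOfBasisRight_rTensor]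
    exact ⟨_, rfl⟩
  · intro h
    obtain ⟨c, hc⟩ : equivFinsuppOfBasisRight 𝒞 x ∈ Set.range (Finsupp.mapRange f f.map_zero) :=
      Finsupp.range_mapRange (α := κ) f f.map_zero ▸ h
    refine ⟨(equivFinsuppOfBasisRight 𝒞).symm c, (equivFinsuppOfBasisRight 𝒞).injective ?_⟩
    rw [equivFinsuppOfBasisRight_rTensor, LinearEquiv.apply_symm_apply]
    exact hc

end TensorProduct

namespace Representation

variable {k G A B : Type*} [CommRing k] [Group G] [AddCommGroup A] [Module k A]
  [AddCommGroup B] [Module k B] (ρ : Representation k G A)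

theorem tprod_trivial_apply (g : G) :
    ρ.tprod (trivial k G B) g = (ρ g).rTensor B :=
  rfl

theorem mem_invariants_tprod_trivial_iff {κ : Type*} [DecidableEq κ] (𝒞 : Module.Basis κ k B)
    (x : A ⊗[k] B) :
    x ∈ (ρ.tprod (trivial k G B)).invariants ↔
      ∀ i, equivFinsuppOfBasisRight 𝒞 x i ∈ ρ.invariants := by
  have hcoord : ∀ g, ρ.tprod (trivial k G B) g x = x ↔
      ∀ i, ρ g (equivFinsuppOfBasisRight 𝒞 x i) = equivFinsuppOfBasisRight 𝒞 x i := fun g => by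
    rw [← (equivFinsuppOfBasisRight 𝒞).injective.eq_iff, tprod_trivial_apply,
      equivFinsuppOfBasisRight_rTensor, Finsupp.ext_iff]
    simp only [Finsupp.mapRange.linearMap_apply, Finsupp.mapRange_apply]
  simp only [mem_invariants, hcoord]
  exact forall_comm

theorem range_rTensor_invariants_subtype [Module.Free k B] :
    LinearMap.range (ρ.invariants.subtype.rTensor B) = (ρ.tprod (trivial k G B)).invariants := by
  classical
  let 𝒞 := Module.Free.chooseBasis k B
  ext x
  rw [mem_range_rTensor_iff 𝒞, mem_invariants_tprod_trivial_iff ρ 𝒞, Submodule.range_subtype]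

noncomputable def invariantsTensorEquivInvariantsTprodTrivial [Module.Free k B] :
    ρ.invariants ⊗[k] B ≃ₗ[k] (ρ.tprod (trivial k G B)).invariants :=
  (LinearEquiv.ofInjective _ (Module.Flat.rTensor_preserves_injective_linearMap _
    ρ.invariants.injective_subtype)).trans
    (LinearEquiv.ofEq _ _ (range_rTensor_invariants_subtype ρ))

end Representation

/-- Let `A` and `B` be `k`-vector spaces with `k`-linear actions of a group `G`,
the action on `B` being trivial. Then `(A ⊗_k B)^G ≅ A^G ⊗_k B`. -/
theorem invariants_tensor_trivial (k : Type*) [Field k] (G : Type*) [Group G]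
    (A B : Type*) [AddCommGroup A] [Module k A] [AddCommGroup B] [Module k B]
    (ρ : Representation k G A) :
    Nonempty (((ρ.tprod (Representation.trivial k (G := G) (V := B))).invariants)
      ≃ₗ[k] (TensorProduct k ρ.invariants B)) :=
  ⟨(ρ.invariantsTensorEquivInvariantsTprodTrivial).symm⟩
end

section
/- Let k and k' be fields of characteristic p such that the elements fixed by the p-power Frobenius in each are exactly F_p, and suppose k ⊗_{F_p} k' is reduced. If u ∈ k ⊗_{F_p} k' satisfies φ_1(u) = u and φ_2(u) = u (the two partial Frobenii), then u ∈ F_p. -/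
/-!
Tensoring over `𝔽_p` is exact, so tensoring the exact sequence
`0 → 𝔽_p → k --(Frob - id)--> k` with `k'` identifies the fixed points of `φ₁` with `1 ⊗ k'`.
Writing `u = 1 ⊗ d`, the relation `φ₂ u = u` becomes `1 ⊗ d ^ p = 1 ⊗ d`, hence `d ^ p = d`
because `k' → k ⊗ k'` is injective, and so `d ∈ 𝔽_p`.
-/

open scoped TensorProduct

open Algebra.TensorProduct

section FixedPoints

variable {R A B : Type*} [CommRing R] [Ring A] [Algebra R A] [Ring B] [Algebra R B]

theorem exact_algebraLinearMap_sub_id {f : A →ₐ[R] A}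
    (hf : ∀ a, f a = a → ∃ r, algebraMap R A r = a) :
    Function.Exact (Algebra.linearMap R A) (f.toLinearMap - LinearMap.id : A →ₗ[R] A) := by
  intro a
  simp only [LinearMap.sub_apply, AlgHom.toLinearMap_apply, LinearMap.id_apply, sub_eq_zero,
    Set.mem_range, Algebra.linearMap_apply]
  refine ⟨fun ha => hf a ha, ?_⟩
  rintro ⟨r, rfl⟩
  exact f.commutes r

theorem exists_one_tmul_eq_of_map_id_eq_self [Module.Flat R B] {f : A →ₐ[R] A}
    (hf : ∀ a, f a = a → ∃ r, algebraMap R A r = a) {u : A ⊗[R] B}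
    (hu : map f (AlgHom.id R B) u = u) :
    ∃ b : B, 1 ⊗ₜ[R] b = u := by
  have hker : (f.toLinearMap - LinearMap.id).rTensor B u = 0 := by
    rw [LinearMap.rTensor_sub, LinearMap.rTensor_id, LinearMap.sub_apply, LinearMap.id_apply,
      sub_eq_zero]
    exact hu
  obtain ⟨v, rfl⟩ := (Module.Flat.rTensor_exact B (exact_algebraLinearMap_sub_id hf) u).mp hker
  refine ⟨TensorProduct.lid R B v, ?_⟩
  conv_rhs => rw [← (TensorProduct.lid R B).symm_apply_apply v, TensorProduct.lid_symm_apply]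
  simp

end FixedPoints

theorem fixed_by_partial_frobenii_mem_Fp_general (p : ℕ) [Fact p.Prime]
    (k k' : Type*) [Field k] [Field k'] [Algebra (ZMod p) k] [Algebra (ZMod p) k']
    [CharP k p] [CharP k' p]
    (hk : ∀ x : k, x ^ p = x → ∃ c : ZMod p, algebraMap (ZMod p) k c = x)
    (hk' : ∀ x : k', x ^ p = x → ∃ c : ZMod p, algebraMap (ZMod p) k' c = x)
    (u : k ⊗[ZMod p] k')
    (h1 : Algebra.TensorProduct.map (frobAlgHom p k) (AlgHom.id (ZMod p) k') u = u)
    (h2 : Algebra.TensorProduct.map (AlgHom.id (ZMod p) k) (frobAlgHom p k') u = u) :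
    ∃ c : ZMod p, algebraMap (ZMod p) (k ⊗[ZMod p] k') c = u := by
  obtain ⟨d, rfl⟩ := exists_one_tmul_eq_of_map_id_eq_self hk h1
  have hd : d ^ p = d := by
    refine includeRight_injective (algebraMap (ZMod p) k).injective ?_
    simpa [frobAlgHom, frobenius_def] using h2
  obtain ⟨c, rfl⟩ := hk' d hd
  exact ⟨c, (includeRight.commutes c).symm⟩

/-- Let `k`, `k'` be fields of characteristic `p` whose Frobenius-fixed elements are
exactly `𝔽_p`, with `k ⊗[𝔽_p] k'` reduced. Any element fixed by both partial
Frobenii lies in `𝔽_p`. -/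
theorem fixed_by_partial_frobenii_mem_Fp (p : ℕ) [Fact p.Prime]
    (k k' : Type*) [Field k] [Field k'] [Algebra (ZMod p) k] [Algebra (ZMod p) k']
    [CharP k p] [CharP k' p]
    (hk : ∀ x : k, x ^ p = x → ∃ c : ZMod p, algebraMap (ZMod p) k c = x)
    (hk' : ∀ x : k', x ^ p = x → ∃ c : ZMod p, algebraMap (ZMod p) k' c = x)
    (hred : IsReduced (k ⊗[ZMod p] k'))
    (u : k ⊗[ZMod p] k')
    (h1 : Algebra.TensorProduct.map (frobAlgHom p k) (AlgHom.id (ZMod p) k') u = u)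
    (h2 : Algebra.TensorProduct.map (AlgHom.id (ZMod p) k) (frobAlgHom p k') u = u) :
    ∃ c : ZMod p, algebraMap (ZMod p) (k ⊗[ZMod p] k') c = u :=
  fixed_by_partial_frobenii_mem_Fp_general p k k' hk hk' u h1 h2
end
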